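/- arXiv:1603.08117 — 5 statements merged into one kernel-verified Lean document; each statement's English description precedes it below -/
import Mathlib

section
/- For every x ∈ M, the complement M \ N⁺(x) of the future null cone of x is open in the Zeeman topology Z, and likewise M \ N⁻(x) is open in Z. Consequently the interval topology T_→ induced by the horismos relation is contained in Z. -/
open Set Metric TopologicalSpace Topology

noncomputable section

/-- Minkowski space `M = ℝ⁴` with the Euclidean metric/topology. -/
abbrev M4 : Type := EuclideanSpace ℝ (Fin 4)

/-- The Minkowski quadratic form `Q(x) = x₀² − x₁² − x₂² − x₃²`. -/
def Q (x : M4) : ℝ := x 0 ^ 2 - x 1 ^ 2 - x 2 ^ 2 - x 3 ^ 2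

/-- Chronological order: `x ≪ y`. -/
def chron (x y : M4) : Prop := Q (y - x) > 0 ∧ x 0 < y 0

/-- Causal order: `x ≺ y`. -/
def causal (x y : M4) : Prop := Q (y - x) ≥ 0 ∧ x 0 ≤ y 0

/-- Horismos: `x → y`. -/
def horismos (x y : M4) : Prop := Q (y - x) = 0 ∧ x ≠ y ∧ x 0 < y 0

/-- The light cone `N(x) = N⁺(x) ∪ N⁻(x)`. -/
def lightCone (x : M4) : Set M4 := {y | horismos x y} ∪ {y | horismos y x}

/-- The Zeeman topology `Z`, generated by the sets `Z_ε(x) = (B_ε(x) \ N(x)) ∪ {x}`. -/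
def Zeeman : TopologicalSpace M4 :=
  TopologicalSpace.generateFrom
    {S | ∃ (x : M4) (ε : ℝ), 0 < ε ∧ S = (Metric.ball x ε \ lightCone x) ∪ {x}}

/-- The interval topology `T_R` of a relation `R`, generated by the subbasis of
complements of the sets `R⁺(x) = {y | R x y}` and `R⁻(x) = {y | R y x}`. -/
def intervalTopology (R : M4 → M4 → Prop) : TopologicalSpace M4 :=
  TopologicalSpace.generateFrom
    ({S | ∃ x : M4, S = {y | R x y}ᶜ} ∪ {S | ∃ x : M4, S = {y | R y x}ᶜ})

/- Since `Q` is positive definite on the hyperplane `v₀ = 0`, the closed half cone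
`{y | Q (y - x) = 0 ∧ x₀ ≤ y₀}` is exactly `N⁺(x) ∪ {x}`; so every point of `M \ N⁺(x)` other than
`x` has a Euclidean ball, hence a Zeeman neighbourhood, avoiding `N⁺(x)`, while at `x` the basic set
`Z_ε(x)` removes the whole light cone. The same works for `N⁻(x)`, and these complements form the
subbasis of `T_→`. -/

lemma continuous_Q : Continuous Q := by
  unfold Q
  fun_prop

lemma eq_zero_of_Q_eq_zero_of_apply_zero {v : M4} (hQ : Q v = 0) (h0 : v 0 = 0) : v = 0 := by
  unfold Q at hQ
  rw [h0] at hQ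
  have h1 : v 1 = 0 := by nlinarith [sq_nonneg (v 1), sq_nonneg (v 2), sq_nonneg (v 3)]
  have h2 : v 2 = 0 := by nlinarith [sq_nonneg (v 1), sq_nonneg (v 2), sq_nonneg (v 3)]
  have h3 : v 3 = 0 := by nlinarith [sq_nonneg (v 1), sq_nonneg (v 2), sq_nonneg (v 3)]
  ext i
  fin_cases i <;> assumption

lemma insert_setOf_horismos_left (x : M4) :
    insert x {y | horismos x y} = {y | Q (y - x) = 0 ∧ x 0 ≤ y 0} := by
  ext y
  simp only [mem_insert_iff, mem_ofPred_eq, horismos]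
  constructor
  · rintro (rfl | ⟨hQ, -, hlt⟩)
    · simp [Q]
    · exact ⟨hQ, hlt.le⟩
  · rintro ⟨hQ, hle⟩
    rcases hle.lt_or_eq with hlt | heq
    · exact .inr ⟨hQ, fun hxy => hlt.ne (congrArg (· 0) hxy), hlt⟩
    · exact .inl (sub_eq_zero.mp (eq_zero_of_Q_eq_zero_of_apply_zero hQ (by simp [heq])))

lemma insert_setOf_horismos_right (x : M4) :
    insert x {y | horismos y x} = {y | Q (x - y) = 0 ∧ y 0 ≤ x 0} := by
  ext y
  simp only [mem_insert_iff, mem_ofPred_eq, horismos]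
  constructor
  · rintro (rfl | ⟨hQ, -, hlt⟩)
    · simp [Q]
    · exact ⟨hQ, hlt.le⟩
  · rintro ⟨hQ, hle⟩
    rcases hle.lt_or_eq with hlt | heq
    · exact .inr ⟨hQ, fun hyx => hlt.ne (congrArg (· 0) hyx), hlt⟩
    · exact .inl (sub_eq_zero.mp (eq_zero_of_Q_eq_zero_of_apply_zero hQ (by simp [heq]))).symm

lemma isClosed_insert_setOf_horismos_left (x : M4) : IsClosed (insert x {y | horismos x y}) := by
  rw [insert_setOf_horismos_left]
  exact (isClosed_eq (continuous_Q.comp (continuous_id.sub continuous_const)) continuous_const).inter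
    (isClosed_le continuous_const (by fun_prop : Continuous fun y : M4 => y 0))

lemma isClosed_insert_setOf_horismos_right (x : M4) : IsClosed (insert x {y | horismos y x}) := by
  rw [insert_setOf_horismos_right]
  exact (isClosed_eq (continuous_Q.comp (continuous_const.sub continuous_id)) continuous_const).inter
    (isClosed_le (by fun_prop : Continuous fun y : M4 => y 0) continuous_const)

lemma notMem_lightCone_self (x : M4) : x ∉ lightCone x := by
  rintro (⟨-, hne, -⟩ | ⟨-, hne, -⟩) <;> exact hne rfl

lemma isOpen_zeeman_ball_diff_lightCone_union {ε : ℝ} (x : M4) (hε : 0 < ε) :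
    IsOpen[Zeeman] ((ball x ε \ lightCone x) ∪ {x}) :=
  isOpen_generateFrom_of_mem ⟨x, ε, hε, rfl⟩

lemma isOpen_zeeman_of_isOpen {U : Set M4} (hU : IsOpen U) : IsOpen[Zeeman] U := by
  refine (@isOpen_iff_forall_mem_open _ Zeeman _).mpr fun y hy => ?_
  obtain ⟨ε, hε, hball⟩ := Metric.isOpen_iff.mp hU y hy
  refine ⟨(ball y ε \ lightCone y) ∪ {y}, ?_, isOpen_zeeman_ball_diff_lightCone_union y hε, .inr rfl⟩
  exact union_subset (sdiff_subset.trans hball) (singleton_subset_iff.mpr hy)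

lemma isOpen_zeeman_compl_of_subset_lightCone {x : M4} {S : Set M4} (hS : S ⊆ lightCone x)
    (hclosed : IsClosed (insert x S)) : IsOpen[Zeeman] Sᶜ := by
  have hx : x ∉ S := fun hxS => notMem_lightCone_self x (hS hxS)
  have hcover : Sᶜ = (insert x S)ᶜ ∪ ((ball x 1 \ lightCone x) ∪ {x}) := by
    refine Subset.antisymm (fun y hy => ?_) (union_subset ?_ ?_)
    · by_cases hyx : y = x
      · exact .inr (.inr hyx)
      · exact .inl (by rintro (h | h); exacts [hyx h, hy h])
    · exact compl_subset_compl.mpr (subset_insert x S)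
    · exact union_subset (fun y hy hyS => hy.2 (hS hyS)) (singleton_subset_iff.mpr hx)
  have hfar : IsOpen[Zeeman] (insert x S)ᶜ := isOpen_zeeman_of_isOpen hclosed.isOpen_compl
  rw [hcover]
  exact @IsOpen.union _ _ _ Zeeman hfar (isOpen_zeeman_ball_diff_lightCone_union x one_pos)

/-- The complements of the future and past null cones are Zeeman-open, hence the
interval topology from horismos is contained in the Zeeman topology. -/
theorem nullcone_complements_Zeeman_open_and_interval_subset :
    (∀ x : M4, IsOpen[Zeeman] {y | horismos x y}ᶜ) ∧
    (∀ x : M4, IsOpen[Zeeman] {y | horismos y x}ᶜ) ∧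
    (∀ s : Set M4, IsOpen[intervalTopology horismos] s → IsOpen[Zeeman] s) := by
  have hfuture (x : M4) : IsOpen[Zeeman] {y | horismos x y}ᶜ :=
    isOpen_zeeman_compl_of_subset_lightCone subset_union_left (isClosed_insert_setOf_horismos_left x)
  have hpast (x : M4) : IsOpen[Zeeman] {y | horismos y x}ᶜ :=
    isOpen_zeeman_compl_of_subset_lightCone subset_union_right (isClosed_insert_setOf_horismos_right x)
  have hle : Zeeman ≤ intervalTopology horismos := by
    refine le_generateFrom ?_
    rintro S (⟨x, rfl⟩ | ⟨x, rfl⟩)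
    exacts [hfuture x, hpast x]
  exact ⟨hfuture, hpast, fun s hs => hle s hs⟩
end
end

section
/- The interval topology T_≪ induced on Minkowski space M = ℝ⁴ by the chronological order ≪ is not equal to the Zeeman topology Z (part of Theorem 2 of the paper). -/
open Set Metric TopologicalSpace

noncomputable section

/-!
Far out along a spatial axis, the points `(0, R, 0, 0)` are eventually spacelike to any given
point, so they lie in every subbasic set `M \ ≪⁺(x)`, `M \ ≪⁻(x)`: this sequence converges in
`T_≪` to every point. In the Zeeman topology, however, `Z_1(0)` is a neighbourhood of `0`
contained in the Euclidean unit ball, which the sequence leaves.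
-/

open Filter Topology

lemma Q_neg (v : M4) : Q (-v) = Q v := by
  simp only [Q, PiLp.neg_apply, neg_sq]

lemma eventually_Q_single_sub_nonpos (x : M4) :
    ∀ᶠ R in atTop, Q (EuclideanSpace.single 1 R - x) ≤ 0 := by
  filter_upwards [eventually_ge_atTop (x 1 + |x 0|)] with R hR
  have hx : x 0 ^ 2 ≤ (R - x 1) ^ 2 := by
    rw [← sq_abs (x 0)]
    exact pow_le_pow_left₀ (abs_nonneg _) (by linarith) 2
  simp only [Q, PiLp.sub_apply, PiLp.single_apply, Fin.reduceEq, if_true, if_false, zero_sub,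
    neg_sq]
  nlinarith [sq_nonneg (x 2), sq_nonneg (x 3)]

lemma tendsto_single_intervalTopology_chron (x : M4) :
    Tendsto (EuclideanSpace.single 1) atTop (@nhds M4 (intervalTopology chron) x) := by
  refine tendsto_nhds_generateFrom_iff.mpr ?_
  rintro s (⟨y, rfl⟩ | ⟨y, rfl⟩) -
  · filter_upwards [eventually_Q_single_sub_nonpos y] with R hR h
    exact hR.not_gt h.1
  · filter_upwards [eventually_Q_single_sub_nonpos y] with R hR h
    rw [← neg_sub, Q_neg] at hR
    exact hR.not_gt h.1

lemma ball_mem_nhds_zeeman (x : M4) {ε : ℝ} (hε : 0 < ε) :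
    ball x ε ∈ @nhds M4 Zeeman x := by
  have hZ : IsOpen[Zeeman] (ball x ε \ lightCone x ∪ {x}) :=
    isOpen_generateFrom_of_mem ⟨x, ε, hε, rfl⟩
  exact mem_of_superset (@IsOpen.mem_nhds M4 Zeeman x _ hZ (Or.inr rfl))
    (union_subset sdiff_subset (singleton_subset_iff.mpr (mem_ball_self hε)))

lemma not_tendsto_single_zeeman (x : M4) :
    ¬ Tendsto (EuclideanSpace.single 1) atTop (@nhds M4 Zeeman x) := by
  intro h
  obtain ⟨R, hR_ball, hR_large⟩ := ((h.eventually_mem (ball_mem_nhds_zeeman x one_pos)).and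
    (eventually_ge_atTop (‖x‖ + 1))).exists
  have hR_dist : R - ‖x‖ ≤ dist (EuclideanSpace.single 1 R : M4) x := by
    calc R - ‖x‖ ≤ ‖(EuclideanSpace.single 1 R : M4)‖ - ‖x‖ := by
          rw [PiLp.norm_single, Real.norm_eq_abs]
          linarith [le_abs_self R]
      _ ≤ dist (EuclideanSpace.single 1 R : M4) x := by
          rw [dist_eq_norm]
          exact norm_sub_norm_le _ _
  linarith [mem_ball.mp hR_ball]

/-- The interval topology from the chronological order is not the Zeeman topology. -/
theorem interval_topology_chron_ne_Zeeman :
    intervalTopology chron ≠ Zeeman := by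
  intro h
  exact not_tendsto_single_zeeman 0 (h ▸ tendsto_single_intervalTopology_chron 0)
end
end

section
/- In Minkowski space M = ℝ⁴, the transitive closure of the horismos relation recovers the strict causal order: x ≺ᵁ y if and only if x ≺ y and x ≠ y. (In particular, every pair x ≪ y of chronologically related events can be joined by a finite chain of horismos-related events.) -/
open Set Metric TopologicalSpace

noncomputable section

/-!
Horismos steps are causal and strictly increase time, and `≺` is transitive (the reverse
Cauchy–Schwarz inequality for future causal vectors), so `x ≺ᵁ y` gives `x ≺ y` with `x ≠ y`.
Conversely, a causal pair with `Q(y - x) = 0` is a single horismos step, and for a timelike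
`v = y - x` the lightlike vector `a (1, 1, 0, 0)` with `a = Q v / (2 (v₀ - v₁))` leaves the
lightlike remainder `v - a (1, 1, 0, 0)`, so `x ≪ y` is joined by a two-step horismos chain.
-/

lemma Q_add_nonneg {a b : M4} (ha : 0 ≤ Q a) (hb : 0 ≤ Q b) (ha₀ : 0 ≤ a 0) (hb₀ : 0 ≤ b 0) :
    0 ≤ Q (a + b) := by
  simp only [Q, PiLp.add_apply] at *
  -- `(a⃗ · b⃗)² ≤ |a⃗|² |b⃗|² ≤ (a₀ b₀)²` by Lagrange's identity and `Q a, Q b ≥ 0`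
  have hspatial : a 1 * b 1 + a 2 * b 2 + a 3 * b 3 ≤ a 0 * b 0 := by
    nlinarith [sq_nonneg (a 1 * b 2 - a 2 * b 1), sq_nonneg (a 1 * b 3 - a 3 * b 1),
      sq_nonneg (a 2 * b 3 - a 3 * b 2), mul_nonneg ha₀ hb₀, mul_nonneg ha hb,
      sq_nonneg (a 0 * b 0 + a 1 * b 1 + a 2 * b 2 + a 3 * b 3)]
  nlinarith

lemma eq_zero_of_Q_nonneg_of_apply_zero_eq_zero {v : M4} (hQ : 0 ≤ Q v) (h₀ : v 0 = 0) :
    v = 0 := by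
  simp only [Q, h₀] at hQ
  ext i
  fin_cases i <;>
    simp only [Fin.isValue, Fin.zero_eta, Fin.mk_one, Fin.reduceFinMk, PiLp.zero_apply] <;>
    nlinarith [sq_nonneg (v 1), sq_nonneg (v 2), sq_nonneg (v 3)]

lemma horismos_iff {x y : M4} : horismos x y ↔ Q (y - x) = 0 ∧ x 0 < y 0 :=
  ⟨fun h => ⟨h.1, h.2.2⟩, fun h => ⟨h.1, fun he => (he ▸ h.2).false, h.2⟩⟩

namespace causal

lemma trans {x y z : M4} (hxy : causal x y) (hyz : causal y z) : causal x z := by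
  refine ⟨?_, hxy.2.trans hyz.2⟩
  rw [← sub_add_sub_cancel z y x, add_comm]
  exact Q_add_nonneg hxy.1 hyz.1 (by simpa using hxy.2) (by simpa using hyz.2)

lemma lt_of_ne {x y : M4} (h : causal x y) (hne : x ≠ y) : x 0 < y 0 := by
  refine h.2.lt_of_ne fun h₀ => hne ?_
  refine (sub_eq_zero.1 (eq_zero_of_Q_nonneg_of_apply_zero_eq_zero h.1 ?_)).symm
  simp [h₀]

end causal

lemma horismos.causal {x y : M4} (h : horismos x y) : causal x y :=
  ⟨h.1.ge, h.2.2.le⟩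

lemma causal_and_lt_of_transGen_horismos {x y : M4} (h : Relation.TransGen horismos x y) :
    causal x y ∧ x 0 < y 0 := by
  induction h with
  | single h => exact ⟨h.causal, h.2.2⟩
  | tail _ h ih => exact ⟨ih.1.trans h.causal, ih.2.trans h.2.2⟩

lemma chron.exists_horismos_horismos {x y : M4} (h : chron x y) :
    ∃ z, horismos x z ∧ horismos z y := by
  obtain ⟨hQ, hlt⟩ := h
  set v := y - x with hv
  have hv₀ : v 0 = y 0 - x 0 := rfl
  simp only [Q] at hQ
  have hv₀₁ : 0 < v 0 - v 1 := by
    nlinarith [sq_nonneg (v 2), sq_nonneg (v 3), sq_nonneg (v 0 + v 1)]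
  set a := Q v / (2 * (v 0 - v 1)) with ha
  have ha_pos : 0 < a := div_pos hQ (by positivity)
  have hQa : Q v = 2 * (v 0 - v 1) * a := by rw [ha]; field_simp
  -- `v₀ - a = ((v₀ - v₁)² + v₂² + v₃²) / (2 (v₀ - v₁))`
  have ha_lt : a < v 0 := by
    rw [ha, div_lt_iff₀ (by positivity), Q]
    nlinarith [sq_nonneg (v 0 - v 1), sq_nonneg (v 2), sq_nonneg (v 3)]
  refine ⟨x + !₂[a, a, 0, 0], horismos_iff.2 ⟨?_, ?_⟩, horismos_iff.2 ⟨?_, ?_⟩⟩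
  · simp [Q]
  · simpa using ha_pos
  · rw [show y - (x + !₂[a, a, 0, 0]) = v - !₂[a, a, 0, 0] by rw [hv]; abel]
    rw [Q] at hQa ⊢
    simp only [Fin.isValue, PiLp.sub_apply, Matrix.cons_val_zero, Matrix.cons_val_one,
      Matrix.cons_val, sub_zero]
    linear_combination hQa
  · simp only [Fin.isValue, PiLp.add_apply, Matrix.cons_val_zero]
    linarith

lemma chron.transGen_horismos {x y : M4} (h : chron x y) : Relation.TransGen horismos x y :=
  let ⟨_, hxz, hzy⟩ := h.exists_horismos_horismos
  .tail (.single hxz) hzy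

/-- The transitive closure of horismos recovers the strict causal order; in particular
chronologically related events are joined by a finite horismos chain. -/
theorem transGen_horismos_iff_strict_causal :
    (∀ x y : M4, Relation.TransGen horismos x y ↔ (causal x y ∧ x ≠ y)) ∧
    (∀ x y : M4, chron x y → Relation.TransGen horismos x y) := by
  refine ⟨fun x y => ⟨fun h => ?_, fun ⟨hc, hne⟩ => ?_⟩, fun _ _ => chron.transGen_horismos⟩
  · obtain ⟨hc, hlt⟩ := causal_and_lt_of_transGen_horismos h
    exact ⟨hc, fun he => (he ▸ hlt).false⟩
  · have hlt := hc.lt_of_ne hne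
    rcases hc.1.eq_or_lt with hQ | hQ
    · exact .single (horismos_iff.2 ⟨hQ.symm, hlt⟩)
    · exact chron.transGen_horismos ⟨hQ, hlt⟩
end
end

section
/- The Alexandrov topology A on Minkowski space M = ℝ⁴, generated by the chronological diamonds ⟨u,v⟩ = I⁺(u) ∩ I⁻(v) = {w : u ≪ w ≪ v} for u, v ∈ M, equals the standard Euclidean topology E on ℝ⁴. -/
open Set Metric TopologicalSpace

noncomputable section

/-- The Alexandrov topology, generated by the chronological diamonds
`⟨u,v⟩ = I⁺(u) ∩ I⁻(v)`. -/
def Alexandrov : TopologicalSpace M4 :=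
  TopologicalSpace.generateFrom
    {S | ∃ u v : M4, S = {w | chron u w} ∩ {w | chron w v}}

lemma Q_cont (u : M4) : Continuous fun w : M4 => Q (w - u) := by
  simp only [Q, PiLp.sub_apply]; fun_prop

lemma isOpen_future (u : M4) : IsOpen {w : M4 | chron u w} := by
  have : {w : M4 | chron u w} = {w : M4 | 0 < Q (w - u)} ∩ {w : M4 | u 0 < w 0} := rfl
  rw [this]
  exact (isOpen_lt continuous_const (Q_cont u)).inter
    (isOpen_lt continuous_const (by fun_prop))

lemma isOpen_past (v : M4) : IsOpen {w : M4 | chron w v} := by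
  have : {w : M4 | chron w v} = {w : M4 | 0 < Q (v - w)} ∩ {w : M4 | w 0 < v 0} := rfl
  rw [this]
  refine IsOpen.inter ?_ (isOpen_lt (by fun_prop) continuous_const)
  refine isOpen_lt continuous_const ?_
  simp only [Q, PiLp.sub_apply]; fun_prop

lemma diamond_nhds (x : M4) {ε : ℝ} (hε : 0 < ε) :
    ∃ u v : M4, x ∈ {w | chron u w} ∩ {w | chron w v} ∧
      {w | chron u w} ∩ {w | chron w v} ⊆ Metric.ball x ε := by
  set δ := ε / 4 with hδdef
  have hδ : 0 < δ := by positivity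
  refine ⟨x - EuclideanSpace.single (0 : Fin 4) δ, x + EuclideanSpace.single (0 : Fin 4) δ, ?_, ?_⟩
  · constructor
    · constructor
      · have : x - (x - EuclideanSpace.single (0 : Fin 4) δ) = EuclideanSpace.single (0 : Fin 4) δ := by abel
        rw [this]
        simp [Q, EuclideanSpace.single_apply]
        positivity
      · simp only [PiLp.sub_apply, EuclideanSpace.single_apply]
        rw [if_pos trivial]
        linarith
    · constructor
      · have : x + EuclideanSpace.single (0 : Fin 4) δ - x = EuclideanSpace.single (0 : Fin 4) δ := by abel
        rw [this]
        simp [Q, EuclideanSpace.single_apply]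
        positivity
      · simp only [PiLp.add_apply, EuclideanSpace.single_apply]
        rw [if_pos trivial]
        linarith
  · rintro w ⟨⟨hQ1, h01⟩, hQ2, h02⟩
    simp only [Q, PiLp.sub_apply, PiLp.add_apply, EuclideanSpace.single_apply,
      show (1 : Fin 4) ≠ 0 by decide, show (2 : Fin 4) ≠ 0 by decide,
      show (3 : Fin 4) ≠ 0 by decide, if_pos rfl, if_true, if_false, if_neg] at hQ1 h01 hQ2 h02
    norm_num at hQ1 h01 hQ2 h02
    rw [Metric.mem_ball, EuclideanSpace.dist_eq, Fin.sum_univ_four]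
    have hd : ∀ i : Fin 4, dist (w i) (x i) ^ 2 = (w i - x i) ^ 2 := by
      intro i; rw [Real.dist_eq, sq_abs]
    simp only [hd]
    rw [show ε = 4 * δ by rw [hδdef]; ring]
    rw [Real.sqrt_lt' (by positivity)]
    nlinarith [sq_nonneg (w 0 - x 0), sq_nonneg (w 1 - x 1), sq_nonneg (w 2 - x 2),
      sq_nonneg (w 3 - x 3), sq_nonneg δ]

/-- The Alexandrov topology equals the standard Euclidean topology on `ℝ⁴`. -/
theorem Alexandrov_eq_Euclidean :
    Alexandrov = (inferInstance : TopologicalSpace M4) := by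
  apply le_antisymm
  · -- Alexandrov finer: every Euclidean open is Alexandrov open
    intro s hs
    have key : ∀ x ∈ s, ∃ U : Set M4, Alexandrov.IsOpen U ∧ x ∈ U ∧ U ⊆ s := by
      intro x hx
      obtain ⟨ε, hε, hball⟩ := Metric.isOpen_iff.mp hs x hx
      obtain ⟨u, v, hxU, hUball⟩ := diamond_nhds x hε
      exact ⟨{w | chron u w} ∩ {w | chron w v},
        TopologicalSpace.GenerateOpen.basic _ ⟨u, v, rfl⟩, hxU, hUball.trans hball⟩
    have hs_eq : s = ⋃₀ {U : Set M4 | Alexandrov.IsOpen U ∧ U ⊆ s} := by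
      apply Set.Subset.antisymm
      · intro x hx
        obtain ⟨U, hU, hxU, hUs⟩ := key x hx
        exact ⟨U, ⟨hU, hUs⟩, hxU⟩
      · rintro x ⟨U, ⟨_, hUs⟩, hxU⟩
        exact hUs hxU
    rw [hs_eq]
    exact Alexandrov.isOpen_sUnion _ (fun t ht => ht.1)
  · -- Euclidean finer than Alexandrov: diamonds are Euclidean open
    apply le_generateFrom
    rintro S ⟨u, v, rfl⟩
    exact (isOpen_future u).inter (isOpen_past v)
end
end

section
/- For every x ∈ M and every ε > 0, the Zeeman basic set Z_ε(x) = (B_ε(x) \ N(x)) ∪ {x} is not open in the standard Euclidean topology E on ℝ⁴; consequently the Zeeman topology Z is strictly finer than E. -/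
open Set Metric TopologicalSpace Topology

noncomputable section

/-- A fixed null direction `(1,1,0,0)`. -/
def vLight : M4 := EuclideanSpace.single 0 1 + EuclideanSpace.single 1 1

lemma vLight_norm_le : ‖vLight‖ ≤ 2 := by
  calc ‖vLight‖ ≤ ‖EuclideanSpace.single (0:Fin 4) (1:ℝ)‖ +
      ‖EuclideanSpace.single (1:Fin 4) (1:ℝ)‖ := norm_add_le _ _
  _ ≤ 2 := by rw [EuclideanSpace.norm_single, EuclideanSpace.norm_single]; norm_num

/-- For every `t > 0`, `x → x + t • vLight`. -/
lemma horismos_of_pos (x : M4) (t : ℝ) (ht : 0 < t) : horismos x (x + t • vLight) := by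
  have hsub : (x + t • vLight) - x = t • vLight := by abel
  have h0 : (x + t • vLight) 0 = x 0 + t := by
    simp [vLight, EuclideanSpace.single_apply]
  refine ⟨?_, ?_, ?_⟩
  · rw [hsub]; simp [Q, vLight, EuclideanSpace.single_apply]
  · intro h
    have h1 : x 0 = x 0 + t := by
      conv_lhs => rw [h]
      exact h0
    linarith
  · rw [h0]; linarith

/-- No Zeeman basic set `Z_ε(x)` is Euclidean-open; consequently the Zeeman topology
is strictly finer than the Euclidean topology. -/
theorem Zeeman_basic_not_euclidean_open_and_strictly_finer :
    (∀ (x : M4) (ε : ℝ), 0 < ε →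
      ¬ IsOpen ((Metric.ball x ε \ lightCone x) ∪ {x})) ∧
    (∀ s : Set M4, IsOpen s → IsOpen[Zeeman] s) ∧
    Zeeman ≠ (inferInstance : TopologicalSpace M4) := by
  have part1 : ∀ (x : M4) (ε : ℝ), 0 < ε →
      ¬ IsOpen ((Metric.ball x ε \ lightCone x) ∪ {x}) := by
    intro x ε hε hopen
    have hx : x ∈ (Metric.ball x ε \ lightCone x) ∪ {x} := Or.inr rfl
    obtain ⟨δ, hδ, hball⟩ := Metric.isOpen_iff.1 hopen x hx
    set t : ℝ := δ / 4 with ht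
    have htpos : 0 < t := by positivity
    set y : M4 := x + t • vLight with hy
    have hhor : horismos x y := horismos_of_pos x t htpos
    have hdist : dist y x < δ := by
      rw [dist_eq_norm, hy, add_sub_cancel_left, norm_smul, Real.norm_eq_abs, abs_of_pos htpos]
      calc t * ‖vLight‖ ≤ t * 2 := by
            exact mul_le_mul_of_nonneg_left vLight_norm_le htpos.le
        _ < δ := by rw [ht]; linarith
    have hyS : y ∈ (Metric.ball x ε \ lightCone x) ∪ {x} :=
      hball (Metric.mem_ball.2 hdist)
    rcases hyS with hmem | heq
    · exact hmem.2 (Or.inl hhor)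
    · exact hhor.2.1 (Set.mem_singleton_iff.1 heq).symm
  refine ⟨part1, ?_, ?_⟩
  · intro s hs
    have hrep : s = ⋃₀ {Z | (∃ (x : M4) (ε : ℝ), 0 < ε ∧
        Z = (Metric.ball x ε \ lightCone x) ∪ {x}) ∧ Z ⊆ s} := by
      apply Set.Subset.antisymm
      · intro x hx
        obtain ⟨ε, hε, hball⟩ := Metric.isOpen_iff.1 hs x hx
        refine ⟨(Metric.ball x ε \ lightCone x) ∪ {x}, ⟨⟨x, ε, hε, rfl⟩, ?_⟩, Or.inr rfl⟩
        intro z hz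
        rcases hz with hz | hz
        · exact hball hz.1
        · exact (Set.mem_singleton_iff.1 hz) ▸ hx
      · rintro x ⟨Z, ⟨_, hZs⟩, hxZ⟩
        exact hZs hxZ
    rw [hrep]
    exact TopologicalSpace.GenerateOpen.sUnion _
      (fun Z hZ => TopologicalSpace.GenerateOpen.basic Z hZ.1)
  · intro h
    have hz : IsOpen[Zeeman] ((Metric.ball (0:M4) 1 \ lightCone 0) ∪ {0}) :=
      TopologicalSpace.GenerateOpen.basic _ ⟨0, 1, one_pos, rfl⟩
    rw [h] at hz
    exact part1 0 1 one_pos hz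
end
end
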